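/- Every simple outerplanar graph is K_{2,3}-subgraph-free in the following sense used for counting: if G is outerplanar with vertex cover S, and D is the set of degree-2 vertices outside S, then |D| ≤ 4|S| − 6 (for |S| ≥ 2). -/

import Mathlib

/-- `G` has `H` as a minor: there are nonempty, pairwise disjoint, connected
branch sets in `G`, one for each vertex of `H`, with an edge of `G` between the
branch sets of any two adjacent vertices of `H`. -/
def HasMinor {V W : Type*} (G : SimpleGraph V) (H : SimpleGraph W) : Prop :=
  ∃ φ : W → Set V,
    (∀ w, (φ w).Nonempty) ∧
    (∀ w, (G.induce (φ w)).Connected) ∧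
    (Pairwise fun a b => Disjoint (φ a) (φ b)) ∧
    (∀ a b, H.Adj a b → ∃ x ∈ φ a, ∃ y ∈ φ b, G.Adj x y)

/-- A graph is outerplanar iff it has neither `K₄` nor `K_{2,3}` as a minor. -/
def Outerplanar {V : Type*} (G : SimpleGraph V) : Prop :=
  ¬ HasMinor G (SimpleGraph.completeGraph (Fin 4)) ∧
    ¬ HasMinor G (completeBipartiteGraph (Fin 2) (Fin 3))

/-!
Let `H` be the graph on `S` joining `a` and `b` whenever some vertex of `D` has neighbourhood
exactly `{a, b}`. Each edge of `H` is subdivided in `G`, so every minor of `H` is a minor of `G`;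
in particular `H` has no `K₄` minor, and therefore at most `2|S| - 3` edges: a `K₄`-minor-free
graph on `n` vertices with `2n - 2` edges has a vertex of degree at most `3`, and deleting it
(and joining two non-adjacent neighbours if its degree is `3`) leaves a `K₄`-minor-free graph
on `n - 1` vertices with at least `2n - 4` edges. Finally, each edge of `H` comes from at most two
vertices of `D`, since three of them would span a `K_{2,3}`. Hence `|D| ≤ 2 (2|S| - 3)`.
-/

open SimpleGraph Finset Function

section Connectivity
variable {V W : Type*} {G : SimpleGraph V} {G' : SimpleGraph W}

theorem SimpleGraph.Reachable.lift (f : V → W)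
    (h : ∀ a b, G.Adj a b → G'.Reachable (f a) (f b)) {a b : V} (hab : G.Reachable a b) :
    G'.Reachable (f a) (f b) := by
  rw [reachable_iff_reflTransGen] at hab ⊢
  exact Relation.ReflTransGen.lift' f (fun a b hadj => (reachable_iff_reflTransGen _ _).mp
    (h a b hadj)) _ _ hab

theorem SimpleGraph.Connected.of_lift (hG : G.Connected) (f : V → W)
    (hadj : ∀ a b, G.Adj a b → G'.Reachable (f a) (f b))
    (hcover : ∀ y, ∃ x, G'.Reachable (f x) y) : G'.Connected := by
  obtain ⟨v⟩ := hG.nonempty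
  refine (connected_iff_exists_forall_reachable G').mpr ⟨f v, fun y => ?_⟩
  obtain ⟨x, hxy⟩ := hcover y
  exact ((hG.preconnected v x).lift f hadj).trans hxy

theorem SimpleGraph.induce_connected_of_forall_eq_or_adj {s : Set V} {c : V} (hc : c ∈ s)
    (h : ∀ x ∈ s, x = c ∨ G.Adj x c) : (G.induce s).Connected := by
  refine (connected_iff_exists_forall_reachable _).mpr ⟨⟨c, hc⟩, fun ⟨x, hx⟩ => ?_⟩
  rcases h x hx with rfl | hxc
  · rfl
  · exact Adj.reachable (G := G.induce s) (u := ⟨x, hx⟩) (v := ⟨c, hc⟩) hxc |>.symm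

end Connectivity

namespace HasMinor
variable {V W X : Type*} {G : SimpleGraph V} {G' : SimpleGraph W} {K : SimpleGraph X}

theorem refl (K : SimpleGraph X) : HasMinor K K :=
  ⟨fun x => {x}, fun x => Set.singleton_nonempty x,
    fun _ => induce_connected_of_forall_eq_or_adj rfl fun _ hy => Or.inl hy,
    fun _ _ hab => Set.disjoint_singleton.mpr hab, fun a b hab => ⟨a, rfl, b, rfl, hab⟩⟩

theorem map (f : Copy G G') (h : HasMinor G K) : HasMinor G' K := by
  obtain ⟨φ, hne, hconn, hdisj, hedge⟩ := h
  refine ⟨fun x => f '' φ x, fun x => (hne x).image f, fun x => ?_,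
    fun a b hab => (hdisj hab).image f.injective.injOn (Set.subset_univ _) (Set.subset_univ _),
    fun a b hab => ?_⟩
  · refine (hconn x).of_lift (fun v => ⟨f v, Set.mem_image_of_mem f v.2⟩)
      (fun a b hab => Adj.reachable (f.toHom.map_adj hab)) ?_
    rintro ⟨_, v, hv, rfl⟩
    exact ⟨⟨v, hv⟩, .rfl⟩
  · obtain ⟨x, hx, y, hy, hxy⟩ := hedge a b hab
    exact ⟨f x, Set.mem_image_of_mem f hx, f y, Set.mem_image_of_mem f hy, f.toHom.map_adj hxy⟩

theorem of_isContained (h : K ⊑ G) : HasMinor G K :=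
  h.elim fun f => (refl K).map f

theorem mono {G₁ G₂ : SimpleGraph V} (hle : G₁ ≤ G₂) (h : HasMinor G₁ K) : HasMinor G₂ K :=
  h.map (Copy.ofLE G₁ G₂ hle)

theorem of_induce {s : Set V} (h : HasMinor (G.induce s) K) : HasMinor G K :=
  h.map (Copy.induce G s)

theorem of_connected_fibers (f : V → W) (hfib : ∀ w, (G.induce (f ⁻¹' {w})).Connected)
    (hadj : ∀ a b, G'.Adj a b → ∃ x y, f x = a ∧ f y = b ∧ G.Adj x y)
    (h : HasMinor G' K) : HasMinor G K := by
  obtain ⟨φ, hne, hconn, hdisj, hedge⟩ := h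
  have hsurj : Surjective f := fun w =>
    let ⟨⟨x, hx⟩⟩ := (hfib w).nonempty; ⟨x, hx⟩
  refine ⟨fun i => f ⁻¹' φ i, fun i => (hne i).preimage hsurj, fun i => ?_,
    fun _ _ hij => (hdisj hij).preimage f, fun i j hij => ?_⟩
  · have hfiber : ∀ x y : f ⁻¹' φ i, f x = f y → (G.induce (f ⁻¹' φ i)).Reachable x y := by
      rintro ⟨x, hx⟩ ⟨y, hy⟩ hxy
      have hsub : f ⁻¹' {f x} ⊆ f ⁻¹' φ i := fun z hz => by
        rw [Set.mem_preimage, Set.mem_singleton_iff.mp hz]; exact hx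
      exact ((hfib (f x)).preconnected ⟨x, rfl⟩ ⟨y, hxy.symm⟩).map
        (G.induceHomOfLE hsub).toHom
    refine (hconn i).of_lift (fun a => ⟨surjInv hsurj a, by simp [surjInv_eq hsurj]⟩) ?_ ?_
    · rintro ⟨a, ha⟩ ⟨b, hb⟩ hab
      obtain ⟨x, y, rfl, rfl, hxy⟩ := hadj a b hab
      have hx : x ∈ f ⁻¹' φ i := ha
      have hy : y ∈ f ⁻¹' φ i := hb
      refine (hfiber _ ⟨x, hx⟩ (surjInv_eq hsurj _)).trans
        ((Adj.reachable (G := G.induce _) (u := ⟨x, hx⟩) (v := ⟨y, hy⟩) hxy).trans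
        (hfiber ⟨y, hy⟩ _ (surjInv_eq hsurj _).symm))
    · rintro ⟨x, hx⟩
      exact ⟨⟨f x, hx⟩, hfiber _ _ (surjInv_eq hsurj _)⟩
  · obtain ⟨a, ha, b, hb, hab⟩ := hedge i j hij
    obtain ⟨x, y, rfl, rfl, hxy⟩ := hadj a b hab
    exact ⟨x, ha, y, hb, hxy⟩

theorem of_induce_compl_singleton_sup_edge {v : V} {p q : ({v}ᶜ : Set V)} (hp : G.Adj v p)
    (hq : G.Adj v q) (h : HasMinor (G.induce {v}ᶜ ⊔ edge p q) K) : HasMinor G K := by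
  classical
  let f : V → ({v}ᶜ : Set V) := fun x => if hx : x = v then p else ⟨x, hx⟩
  have hf : ∀ x : ({v}ᶜ : Set V), f x = x := fun x => dif_neg x.2
  refine h.of_connected_fibers f (fun w => ?_) ?_
  · refine induce_connected_of_forall_eq_or_adj (hf w) fun x hx => ?_
    by_cases hxv : x = v
    · subst hxv
      right
      rw [← Set.mem_singleton_iff.mp hx]
      simpa [f] using hp
    · left
      have : f x = ⟨x, hxv⟩ := dif_neg hxv
      rw [← congrArg Subtype.val (Set.mem_singleton_iff.mp hx), this]
  · intro a b hab
    rcases hab with hab | hab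
    · exact ⟨a, b, hf a, hf b, hab⟩
    · obtain ⟨⟨rfl, rfl⟩ | ⟨rfl, rfl⟩, -⟩ := (edge_adj _ _ _ _).mp hab
      · exact ⟨v, b, dif_pos rfl, hf b, hq⟩
      · exact ⟨a, v, hf a, dif_pos rfl, hq.symm⟩

end HasMinor

section Suppress
variable {V X : Type*} {G : SimpleGraph V} {K : SimpleGraph X}

def SimpleGraph.suppress (G : SimpleGraph V) (S D : Set V) : SimpleGraph S :=
  fromRel fun a b => ∃ w ∈ D, G.neighborSet w = {(a : V), (b : V)}

theorem SimpleGraph.suppress_adj {S D : Set V} {a b : S} (h : (G.suppress S D).Adj a b) :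
    ∃ w ∈ D, G.neighborSet w = {(a : V), (b : V)} := by
  obtain ⟨-, hab | ⟨w, hw, hwba⟩⟩ := h
  · exact hab
  · exact ⟨w, hw, hwba.trans (Set.pair_comm _ _)⟩

theorem index_eq_or_eq_of_neighborSet_eq_pair {S : Set V} {φ : X → Set S}
    (hdisj : Pairwise fun i j => Disjoint (φ i) (φ j)) {w : V} {a b : S} {i j k : X}
    (hw : G.neighborSet w = {(a : V), (b : V)}) (ha : a ∈ φ i) (hb : b ∈ φ j)
    (hk : ∃ x ∈ φ k, G.Adj w x) : k = i ∨ k = j := by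
  have hindex {i j : X} {a : S} (hi : a ∈ φ i) (hj : a ∈ φ j) : i = j := by
    by_contra hij
    exact Set.disjoint_left.mp (hdisj hij) hi hj
  obtain ⟨z, hz, hwz⟩ := hk
  have hz' : (z : V) ∈ G.neighborSet w := hwz
  rcases hw ▸ hz' with hza | hzb
  · exact .inl (hindex hz (Subtype.ext hza ▸ ha))
  · exact .inr (hindex hz (Subtype.ext hzb ▸ hb))

theorem HasMinor.of_suppress {S D : Set V} (hDS : Disjoint D S)
    (h : HasMinor (G.suppress S D) K) : HasMinor G K := by
  obtain ⟨φ, hne, hconn, hdisj, hedge⟩ := h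
  cases isEmpty_or_nonempty X
  · exact ⟨isEmptyElim, isEmptyElim, isEmptyElim, fun i => isEmptyElim i, fun i => isEmptyElim i⟩
  let P (w : V) (i : X) : Prop := ∃ x ∈ φ i, G.Adj w x
  -- a vertex outside `S` joins one (arbitrarily chosen) branch set it is adjacent to
  let c (w : V) : X := Classical.epsilon (P w)
  have hc {w : V} {i : X} (h : P w i) : P w (c w) := Classical.epsilon_spec ⟨_, h⟩
  let χ (i : X) : Set V := Subtype.val '' φ i ∪ {w | w ∉ S ∧ P w i ∧ c w = i}
  have hmem {i : X} {a : S} (ha : a ∈ φ i) : (a : V) ∈ χ i := Or.inl ⟨_, ha, rfl⟩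
  have hlink {i j : X} {a b : S} (ha : a ∈ φ i) (hb : b ∈ φ j) (hab : (G.suppress S D).Adj a b) :
      ∃ w, G.Adj a w ∧ G.Adj w b ∧ (w ∈ χ i ∨ w ∈ χ j) := by
    obtain ⟨w, hwD, hw⟩ := suppress_adj hab
    have hwa : G.Adj w a := by simp [← mem_neighborSet, hw]
    have hwb : G.Adj w b := by simp [← mem_neighborSet, hw]
    have hPw : P w i := ⟨a, ha, hwa⟩
    have hwS : w ∉ S := Set.disjoint_left.mp hDS hwD
    refine ⟨w, hwa.symm, hwb, ?_⟩
    rcases index_eq_or_eq_of_neighborSet_eq_pair hdisj hw ha hb (hc hPw) with hcw | hcw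
    · exact .inl (.inr ⟨hwS, hcw ▸ hc hPw, hcw⟩)
    · exact .inr (.inr ⟨hwS, hcw ▸ hc hPw, hcw⟩)
  refine ⟨χ, fun i => ((hne i).image _).mono Set.subset_union_left, fun i => ?_,
    fun i j hij => ?_, fun i j hij => ?_⟩
  · refine (hconn i).of_lift (fun a => ⟨a.1, hmem a.2⟩) ?_ ?_
    · rintro ⟨a, ha⟩ ⟨b, hb⟩ hab
      obtain ⟨w, haw, hwb, hw⟩ := hlink ha hb hab
      exact (Adj.reachable (G := G.induce (χ i)) (u := ⟨a, hmem ha⟩) (v := ⟨w, hw.elim id id⟩)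
        haw).trans
        (Adj.reachable (G := G.induce (χ i)) (v := ⟨b, hmem hb⟩) hwb)
    · rintro ⟨y, ⟨a, ha, rfl⟩ | ⟨-, ⟨a, ha, hya⟩, -⟩⟩
      · exact ⟨⟨a, ha⟩, .rfl⟩
      · exact ⟨⟨a, ha⟩, Adj.reachable (G := G.induce (χ i)) (u := ⟨a, hmem ha⟩) hya.symm⟩
  · refine Set.disjoint_left.mpr ?_
    rintro y (⟨a, ha, rfl⟩ | ⟨hyS, -, hyi⟩) (⟨b, hb, hab⟩ | ⟨hyS', -, hyj⟩)
    · exact Set.disjoint_left.mp (hdisj hij) ha (Subtype.ext hab ▸ hb)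
    · exact hyS' a.2
    · exact hyS (hab ▸ b.2)
    · exact hij (hyi.symm.trans hyj)
  · obtain ⟨a, ha, b, hb, hab⟩ := hedge i j hij
    obtain ⟨w, haw, hwb, hw | hw⟩ := hlink ha hb hab
    · exact ⟨w, hw, b, hmem hb, hwb⟩
    · exact ⟨a, hmem ha, w, hw, haw⟩

end Suppress

namespace SimpleGraph
variable {V : Type*} [Fintype V] {G : SimpleGraph V}

theorem exists_degree_lt_of_two_mul_card_edgeFinset_lt [DecidableRel G.Adj] {k : ℕ}
    (h : 2 * #G.edgeFinset < Fintype.card V * k) : ∃ v, G.degree v < k := by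
  by_contra! hk
  have := Finset.sum_le_sum fun v (_ : v ∈ univ) => hk v
  rw [sum_const, card_univ, smul_eq_mul, sum_degrees_eq_twice_card_edges] at this
  omega

theorem exists_le_card_edgeFinset_eq [Fintype G.edgeSet] {k : ℕ} (hk : k ≤ #G.edgeFinset) :
    ∃ G' ≤ G, ∃ _ : DecidableRel G'.Adj, #G'.edgeFinset = k := by
  classical
  obtain ⟨T, hT, hTcard⟩ := exists_subset_card_eq (Nat.sub_le #G.edgeFinset k)
  refine ⟨G.deleteEdges T, deleteEdges_le _, inferInstance, ?_⟩
  rw [edgeFinset_deleteEdges, card_sdiff_of_subset hT, hTcard]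
  omega

end SimpleGraph

section EdgeBound
variable {V : Type*} [Fintype V] {G : SimpleGraph V}

theorem exists_neighbors_not_adj_of_not_hasMinor_K4 [DecidableRel G.Adj]
    (hG : ¬HasMinor G (completeGraph (Fin 4))) {v : V} (hv : G.degree v = 3) :
    ∃ p q, G.Adj v p ∧ G.Adj v q ∧ p ≠ q ∧ ¬G.Adj p q := by
  classical
  by_contra! hclique
  refine hG (.of_isContained ((not_cliqueFree_iff_top_isContained 4).mp
    fun hfree => hfree (insert v (G.neighborFinset v)) ⟨?_, ?_⟩))
  · rw [coe_insert, isClique_insert, coe_neighborFinset]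
    exact ⟨fun p hp q hq hpq => hclique p q hp hq hpq, fun p hp _ => hp⟩
  · rw [card_insert_of_notMem (by simp), card_neighborFinset_eq_degree, hv]

theorem card_edgeFinset_le_of_not_hasMinor_K4 [Fintype G.edgeSet]
    (hG : ¬HasMinor G (completeGraph (Fin 4))) : #G.edgeFinset ≤ 2 * Fintype.card V - 3 := by
  classical
  induction hn : Fintype.card V using Nat.strong_induction_on generalizing V with
  | _ n ih =>
  by_contra! hlt
  have hn4 : 4 ≤ n := by
    by_contra! h
    have hsmall : n.choose 2 ≤ 2 * n - 3 := by interval_cases n <;> decide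
    have := hn ▸ G.card_edgeFinset_le_card_choose_two
    omega
  -- a spanning subgraph with exactly `2n - 2` edges has average degree below `4`
  obtain ⟨G₀, hle, _, hcard₀⟩ := G.exists_le_card_edgeFinset_eq (k := 2 * n - 2) (by omega)
  have hG₀ : ¬HasMinor G₀ (completeGraph (Fin 4)) := fun h => hG (h.mono hle)
  obtain ⟨v, hv⟩ := G₀.exists_degree_lt_of_two_mul_card_edgeFinset_lt (k := 4)
    (by rw [hcard₀, hn]; omega)
  have hcard : Fintype.card ({v}ᶜ : Set V) = n - 1 := by
    rw [Fintype.card_compl_set, hn]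
    simp
  have hdel : #(G₀.induce {v}ᶜ).edgeFinset = 2 * n - 2 - G₀.degree v := by
    rw [card_edgeFinset_induce_compl_singleton, card_edgeFinset_deleteIncidenceSet, hcard₀]
  have ih' (H : SimpleGraph ({v}ᶜ : Set V)) [Fintype H.edgeSet]
      (hH : ¬HasMinor H (completeGraph (Fin 4))) : #H.edgeFinset ≤ 2 * (n - 1) - 3 :=
    ih (n - 1) (by omega) hH hcard
  rcases (by omega : G₀.degree v ≤ 2 ∨ G₀.degree v = 3) with hv2 | hv3
  · have := ih' _ fun h => hG₀ h.of_induce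
    omega
  · obtain ⟨p, q, hp, hq, hpq, hnpq⟩ := exists_neighbors_not_adj_of_not_hasMinor_K4 hG₀ hv3
    let p' : ({v}ᶜ : Set V) := ⟨p, hp.ne.symm⟩
    let q' : ({v}ᶜ : Set V) := ⟨q, hq.ne.symm⟩
    have := ih' (G₀.induce {v}ᶜ ⊔ edge p' q')
      fun h => hG₀ (h.of_induce_compl_singleton_sup_edge (p := p') (q := q') hp hq)
    have hsup := card_edgeFinset_sup_edge (G₀.induce {v}ᶜ) (s := p') (t := q') hnpq
      fun h => hpq (congrArg Subtype.val h)
    omega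

end EdgeBound

theorem card_le_two_of_isCompleteBetween_of_not_hasMinor_K23 {V : Type*} {G : SimpleGraph V}
    (hG : ¬HasMinor G (completeBipartiteGraph (Fin 2) (Fin 3))) {a b : V} (hab : a ≠ b)
    {T : Finset V} (hT : G.IsCompleteBetween {a, b} T) : #T ≤ 2 := by
  classical
  by_contra! hT3
  obtain ⟨T', hT'T, hT'⟩ := exists_subset_card_eq hT3
  exact hG (.of_isContained (completeBipartiteGraph_isContained_iff.mpr
    ⟨{a, b}, T', by simp [hab], by simpa using hT', fun x hx y hy =>
      hT (by simpa using hx) (hT'T hy)⟩))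

theorem card_le_two_mul_card_edgeFinset_suppress {V : Type*} [Fintype V] {G : SimpleGraph V}
    [DecidableRel G.Adj] (hG : ¬HasMinor G (completeBipartiteGraph (Fin 2) (Fin 3))) {S : Set V}
    (hS : ∀ u v, G.Adj u v → u ∈ S ∨ v ∈ S) {D : Finset V}
    (hD : ∀ w ∈ D, w ∉ S ∧ G.degree w = 2) [Fintype (G.suppress S D).edgeSet] :
    #D ≤ 2 * #(G.suppress S D).edgeFinset := by
  classical
  suffices #D * 1 ≤ #(G.suppress S D).edgeFinset * 2 by omega
  refine card_mul_le_card_mul (fun w (e : Sym2 S) => ∀ z ∈ e, G.Adj (z : V) w)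
    (fun w hw => ?_) (fun e he => ?_)
  · obtain ⟨hwS, hdeg⟩ := hD w hw
    obtain ⟨x, y, hxy, hN⟩ := card_eq_two.mp ((G.card_neighborFinset_eq_degree w).trans hdeg)
    have hnbr (z : V) (hz : G.Adj w z) : z ∈ S := (hS w z hz).resolve_left hwS
    have hx : G.Adj w x := by rw [← mem_neighborFinset, hN]; simp
    have hy : G.Adj w y := by rw [← mem_neighborFinset, hN]; simp
    refine card_pos.mpr ⟨s(⟨x, hnbr x hx⟩, ⟨y, hnbr y hy⟩), mem_filter.mpr ⟨?_, ?_⟩⟩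
    · refine mem_edgeFinset.mpr ⟨fun h => hxy (congrArg Subtype.val h), Or.inl ⟨w, hw, ?_⟩⟩
      rw [← coe_neighborFinset, hN, coe_pair]
    · simp [hx.symm, hy.symm]
  · induction e using Sym2.ind with | h a b => ?_
    have hab : a ≠ b := (mem_edgeSet _).mp (mem_edgeFinset.mp he) |>.ne
    refine card_le_two_of_isCompleteBetween_of_not_hasMinor_K23 hG (Subtype.coe_ne_coe.mpr hab) ?_
    intro x hx w hw
    have hw' := (mem_filter.mp hw).2
    rcases hx with rfl | rfl
    · exact hw' a (Sym2.mem_mk_left a b)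
    · exact hw' b (Sym2.mem_mk_right a b)

theorem stmt15_general {V : Type*} [Fintype V] [DecidableEq V] (G : SimpleGraph V)
    [DecidableRel G.Adj] (hG : Outerplanar G)
    (S : Finset V) (hS : ∀ u v : V, G.Adj u v → u ∈ S ∨ v ∈ S)
    (D : Finset V)
    (hD : D = Finset.univ.filter fun v => v ∉ S ∧ G.degree v = 2) :
    D.card ≤ 4 * S.card - 6 := by
  classical
  obtain ⟨hK4, hK23⟩ := hG
  have hDS : ∀ w ∈ D, w ∉ S ∧ G.degree w = 2 := fun w hw => by simpa [hD] using hw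
  have hedges := card_edgeFinset_le_of_not_hasMinor_K4 fun h =>
    hK4 (h.of_suppress (D := D) (Set.disjoint_left.mpr fun w hw => (hDS w hw).1))
  have hcount := card_le_two_mul_card_edgeFinset_suppress hK23 hS hDS
  simp only [Finset.coe_sort_coe, Fintype.card_coe] at hedges
  omega

/-- In an outerplanar graph with vertex cover `S` with `|S| ≥ 2`, the set `D` of
degree-2 vertices outside `S` satisfies `|D| ≤ 4|S| - 6`. -/
theorem stmt15 {V : Type*} [Fintype V] [DecidableEq V] (G : SimpleGraph V)
    [DecidableRel G.Adj] (hG : Outerplanar G)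
    (S : Finset V) (hS : ∀ u v : V, G.Adj u v → u ∈ S ∨ v ∈ S)
    (D : Finset V)
    (hD : D = Finset.univ.filter fun v => v ∉ S ∧ G.degree v = 2)
    (hScard : 2 ≤ S.card) :
    D.card ≤ 4 * S.card - 6 :=
  stmt15_general G hG S hS D hD
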